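/- Let G = (A, B, E) be a bipartite graph and let T be a tree with V(T) = A such that N_G(b) induces a subtree of T for every b ∈ B. Fix an edge uv ∈ E(T), let T₁ (containing u) and T₂ (containing v) be the two components of T − uv, A_i = V(T_i), B₁ = {b ∈ B : N(b) ∩ A₁ ≠ ∅}, B₂ = B \ B₁. If T₂ has at most L leaves when rooted at v, then every induced matching in the cut bipartite graph between A₁ ∪ B₁ and A₂ ∪ B₂ has size at most L. -/

import Mathlib

/-- Every induced matching in the cut graph between `X` and `Y` (edges of `G` with one
endpoint in `X` and the other in `Y`) has size at most `k`. -/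
def IMatchLE {V : Type*} (G : SimpleGraph V) (X Y : Set V) (k : ℕ) : Prop :=
  ∀ M : Finset (V × V),
    (∀ p ∈ M, G.Adj p.1 p.2 ∧ p.1 ∈ X ∧ p.2 ∈ Y) →
    (∀ p ∈ M, ∀ q ∈ M, p ≠ q →
      p.1 ≠ q.1 ∧ p.2 ≠ q.2 ∧ ¬G.Adj p.1 q.2 ∧ ¬G.Adj q.1 p.2) →
    M.card ≤ k

/-- The bipartite graph `G = (A, B, E)` given by neighbourhoods `N : B → Set A`. -/
def BipGraph {A B : Type*} (N : B → Set A) : SimpleGraph (A ⊕ B) :=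
  SimpleGraph.fromRel (fun x y =>
    match x, y with
    | Sum.inl a, Sum.inr b => a ∈ N b
    | _, _ => False)

open SimpleGraph Walk

section helpers
variable {V : Type*} {G : SimpleGraph V}

lemma myAcyclicAnti {H : SimpleGraph V} (hle : G ≤ H) (hH : H.IsAcyclic) : G.IsAcyclic :=
  fun _v c hc => hH (c.mapLe hle) (hc.mapLe hle)

lemma myPathLenDist [DecidableEq V] (hG : G.IsAcyclic) {x y : V} {p : G.Walk x y} (hp : p.IsPath) :
    p.length = G.dist x y := by
  have hr : G.Reachable x y := ⟨p⟩
  obtain ⟨w, hw⟩ := hr.exists_walk_length_eq_dist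
  have hpe : p = w.bypass := by
    have := hG.path_unique ⟨p, hp⟩ ⟨w.bypass, w.bypass_isPath⟩
    exact congrArg Subtype.val this
  have h1 : G.dist x y ≤ p.length := dist_le p
  have h2 : p.length ≤ w.length := hpe ▸ w.length_bypass_le
  omega

lemma myDistTriangle {x y z : V} (h1 : G.Reachable x y) (h2 : G.Reachable y z) :
    G.dist x z ≤ G.dist x y + G.dist y z := by
  obtain ⟨p, hp⟩ := h1.exists_walk_length_eq_dist
  obtain ⟨q, hq⟩ := h2.exists_walk_length_eq_dist
  rw [← hp, ← hq, ← Walk.length_append]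
  apply dist_le

lemma myIsPathConcat {u v w : V} {p : G.Walk u v} (hp : p.IsPath) (h : G.Adj v w)
    (hw : w ∉ p.support) : (p.concat h).IsPath := by
  rw [← isPath_reverse_iff, reverse_concat]
  exact hp.reverse.cons (by simpa [Walk.support_reverse] using hw)

lemma myTakeUntilCons [DecidableEq V] {x y z w : V} (r : G.Adj x y) (p : G.Walk y z)
    (h' : w ∈ (Walk.cons r p).support) (hne : x ≠ w) (h : w ∈ p.support) :
    (Walk.cons r p).takeUntil w h' = Walk.cons r (p.takeUntil w h) := by
  simp [Walk.takeUntil, hne]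

lemma myMemTakeOr [DecidableEq V] {v w : V} (p : G.Walk v w) {x y : V}
    (hx : x ∈ p.support) (hy : y ∈ p.support) :
    x ∈ (p.takeUntil y hy).support ∨ y ∈ (p.takeUntil x hx).support := by
  induction p with
  | nil =>
    left
    rw [Walk.mem_support_nil_iff] at hx
    subst hx
    exact Walk.start_mem_support _
  | cons r p ih =>
    rename_i a b c
    by_cases hxa : a = x
    · subst hxa; left; exact Walk.start_mem_support _
    · by_cases hya : a = y
      · subst hya; right; exact Walk.start_mem_support _
      · have hx' : x ∈ p.support := by
          rcases List.mem_cons.mp (Walk.support_cons r p ▸ hx : x ∈ a :: p.support) with h | h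
          · exact absurd h.symm hxa
          · exact h
        have hy' : y ∈ p.support := by
          rcases List.mem_cons.mp (Walk.support_cons r p ▸ hy : y ∈ a :: p.support) with h | h
          · exact absurd h.symm hya
          · exact h
        rcases ih hx' hy' with h | h
        · left
          rw [myTakeUntilCons r p hy hya hy', Walk.support_cons]
          exact List.mem_cons_of_mem _ h
        · right
          rw [myTakeUntilCons r p hx hxa hx', Walk.support_cons]
          exact List.mem_cons_of_mem _ h

lemma myTakeUntilLenLt [DecidableEq V] {v w : V} (p : G.Walk v w) {y : V}
    (h : y ∈ p.support) (hne : y ≠ w) : (p.takeUntil y h).length < p.length := by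
  have hs := congrArg Walk.length (p.take_spec h)
  rw [Walk.length_append] at hs
  have : (p.dropUntil y h).length ≠ 0 := fun h0 => hne (Walk.eq_of_length_eq_zero h0)
  omega

lemma myBipAdj {A B : Type*} (N : B → Set A) (a : A) (b : B) :
    (BipGraph N).Adj (Sum.inl a) (Sum.inr b) ↔ a ∈ N b := by
  simp [BipGraph, SimpleGraph.fromRel_adj]

lemma myBipAdjLL {A B : Type*} (N : B → Set A) (a a' : A) :
    ¬ (BipGraph N).Adj (Sum.inl a) (Sum.inl a') := by
  simp [BipGraph, SimpleGraph.fromRel_adj]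

lemma myBipAdjRR {A B : Type*} (N : B → Set A) (b b' : B) :
    ¬ (BipGraph N).Adj (Sum.inr b) (Sum.inr b') := by
  simp [BipGraph, SimpleGraph.fromRel_adj]

end helpers


/-- with a tree support `T` on `A`, an edge `uv` of `T` splitting `T`
into `T₁ ∋ u` and `T₂ ∋ v` (with vertex sets the reachability classes of `u` resp. `v`
in `T − uv`), `B₁` the vertices of `B` with a neighbour in `A₁` and `B₂ = B \ B₁`:
if `T₂` rooted at `v` has at most `L` leaves (vertices all of whose neighbours are
closer to `v`), then every induced matching in the cut graph between `A₁ ∪ B₁` and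
`A₂ ∪ B₂` has size at most `L`. -/
theorem stmt_11 {A B : Type*} [Fintype A] (T : SimpleGraph A) (hT : T.IsTree)
    (N : B → Set A) (hsub : ∀ b : B, (T.induce (N b)).Connected)
    (u v : A) (huv : T.Adj u v) (L : ℕ)
    (hleaves : {x : A | (T.deleteEdges {s(u, v)}).Reachable v x ∧
        ∀ y : A, (T.deleteEdges {s(u, v)}).Adj x y →
          (T.deleteEdges {s(u, v)}).dist v y + 1 = (T.deleteEdges {s(u, v)}).dist v x}.ncard
        ≤ L) :
    IMatchLE (BipGraph N)
      (Sum.inl '' {x : A | (T.deleteEdges {s(u, v)}).Reachable u x} ∪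
        Sum.inr '' {b : B | ∃ a ∈ N b, (T.deleteEdges {s(u, v)}).Reachable u a})
      (Sum.inl '' {x : A | (T.deleteEdges {s(u, v)}).Reachable v x} ∪
        Sum.inr '' {b : B | ¬∃ a ∈ N b, (T.deleteEdges {s(u, v)}).Reachable u a})
      L := by
  classical
  intro M h1 h2
  set T' := T.deleteEdges {s(u, v)} with hT'def
  have hTle : T' ≤ T := SimpleGraph.deleteEdges_le _
  have hAcy : T'.IsAcyclic := myAcyclicAnti hTle hT.IsAcyclic
  have hbridge : ¬ T'.Reachable u v := by
    have hb := (SimpleGraph.isAcyclic_iff_forall_adj_isBridge.mp hT.IsAcyclic) huv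
    exact SimpleGraph.isBridge_iff.mp hb
  have huniq : ∀ {x y : A} (p q : T'.Walk x y), p.IsPath → q.IsPath → p = q := by
    intro x y p q hp hq
    exact congrArg Subtype.val (hAcy.path_unique ⟨p, hp⟩ ⟨q, hq⟩)
  have huniqT : ∀ {x y : A} (p q : T.Walk x y), p.IsPath → q.IsPath → p = q := by
    intro x y p q hp hq
    exact congrArg Subtype.val (hT.IsAcyclic.path_unique ⟨p, hp⟩ ⟨q, hq⟩)
  have hcross : ∀ {x y : A} (W : T.Walk x y), T'.Reachable u x → T'.Reachable v y →
      v ∈ W.support := by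
    intro x y W hux hvy
    have hedge : s(u, v) ∈ W.edges := by
      by_contra hne
      have hsube : ∀ e ∈ W.edges, e ∈ T'.edgeSet := by
        intro e he
        rw [hT'def, SimpleGraph.edgeSet_deleteEdges]
        refine ⟨W.edges_subset_edgeSet he, ?_⟩
        intro hmem
        rw [Set.mem_singleton_iff] at hmem
        exact hne (hmem ▸ he)
      have hreach : T'.Reachable x y := ⟨W.transfer T' hsube⟩
      exact hbridge ((hux.trans hreach).trans hvy.symm)
    exact W.snd_mem_support_of_mem_edges hedge
  -- Step B
  have hNbpath : ∀ (b : B) (a : A), a ∈ N b → (∃ a₀ ∈ N b, T'.Reachable u a₀) →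
      T'.Reachable v a → ∃ Q : T'.Walk v a, Q.IsPath ∧ ∀ x ∈ Q.support, x ∈ N b := by
    rintro b a haN ⟨a₀, ha₀N, hua₀⟩ hva
    have hvN : v ∈ N b := by
      obtain ⟨w⟩ := (hsub b).preconnected ⟨a₀, ha₀N⟩ ⟨a, haN⟩
      have hW := hcross (w.map (SimpleGraph.Embedding.induce (N b)).toHom) hua₀ hva
      rw [Walk.support_map] at hW
      obtain ⟨z, _, hz⟩ := List.mem_map.mp hW
      exact hz ▸ z.2
    obtain ⟨w₂⟩ := (hsub b).preconnected ⟨v, hvN⟩ ⟨a, haN⟩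
    set W₂ : T.Walk v a := w₂.map (SimpleGraph.Embedding.induce (N b)).toHom with hW₂
    have hW₂sub : ∀ x ∈ W₂.support, x ∈ N b := by
      intro x hx
      have hx2 : x ∈ (w₂.map (SimpleGraph.Embedding.induce (N b)).toHom).support := hx
      rw [Walk.support_map] at hx2
      obtain ⟨z, _, hz⟩ := List.mem_map.mp hx2
      exact hz ▸ z.2
    obtain ⟨w₃⟩ := hva
    refine ⟨w₃.bypass, w₃.bypass_isPath, ?_⟩
    have hQT : (w₃.bypass.transfer T (fun e he =>
        (SimpleGraph.edgeSet_mono hTle) (Walk.edges_subset_edgeSet _ he))) = W₂.bypass :=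
      huniqT _ _ (w₃.bypass_isPath.transfer _) W₂.bypass_isPath
    intro x hx
    have : x ∈ W₂.bypass.support := by
      rw [← hQT, Walk.support_transfer]
      exact hx
    exact hW₂sub x (W₂.support_bypass_subset this)
  -- key step
  have key : ∀ p ∈ M, ∃ (ℓ : A) (b : B) (a : A),
      (T'.Reachable v ℓ ∧ ∀ y : A, T'.Adj ℓ y → T'.dist v y + 1 = T'.dist v ℓ) ∧
      p = (Sum.inr b, Sum.inl a) ∧
      ∃ (P : T'.Walk v ℓ) (hP : P.IsPath) (ha : a ∈ P.support),
        ∀ x ∈ (P.takeUntil a ha).support, x ∈ N b := by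
    intro p hp
    obtain ⟨hadj, hpx, hpy⟩ := h1 p hp
    rcases hpx with hpx | hpx
    · obtain ⟨a1, ha1, hEq1⟩ := hpx
      exfalso
      rcases hpy with hpy | hpy
      · obtain ⟨a2, _, hEq2⟩ := hpy
        rw [← hEq1, ← hEq2] at hadj
        exact myBipAdjLL N a1 a2 hadj
      · obtain ⟨b2, hb2, hEq2⟩ := hpy
        rw [← hEq1, ← hEq2] at hadj
        exact hb2 ⟨a1, (myBipAdj N a1 b2).mp hadj, ha1⟩
    · obtain ⟨b1, hb1, hEq1⟩ := hpx
      rcases hpy with hpy | hpy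
      · obtain ⟨a2, ha2, hEq2⟩ := hpy
        -- the good case
        have hadj' : a2 ∈ N b1 := by
          rw [← hEq1, ← hEq2] at hadj
          exact (myBipAdj N a2 b1).mp hadj.symm
        obtain ⟨Q, hQpath, hQsub⟩ := hNbpath b1 a2 hadj' hb1 ha2
        set Sset : Set A := {x | ∃ P : T'.Walk v x, P.IsPath ∧ a2 ∈ P.support} with hSdef
        have hSne : a2 ∈ Sset := ⟨Q, hQpath, Walk.end_mem_support _⟩
        obtain ⟨ℓ, hℓS, hmax⟩ :=
          Set.Finite.exists_maximalFor (T'.dist v) Sset (Set.toFinite _) ⟨a2, hSne⟩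
        have hmax' : ∀ x ∈ Sset, T'.dist v x ≤ T'.dist v ℓ := by
          intro x hx
          by_contra hlt
          push_neg at hlt
          have := hmax (j := x) hx (le_of_lt hlt)
          omega
        obtain ⟨P, hP, haP⟩ := hℓS
        have hleaf : ∀ y : A, T'.Adj ℓ y → T'.dist v y + 1 = T'.dist v ℓ := by
          intro y hadjy
          have hyP : y ∈ P.support := by
            by_contra hy
            have hP' := myIsPathConcat hP hadjy hy
            have hyS : y ∈ Sset := by
              refine ⟨P.concat hadjy, hP', ?_⟩
              rw [Walk.support_concat]
              simp only [List.concat_eq_append, List.mem_append]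
              exact Or.inl haP
            have hlen := myPathLenDist hAcy hP'
            rw [Walk.length_concat] at hlen
            have hlenP := myPathLenDist hAcy hP
            have := hmax' y hyS
            omega
          have hyne : y ≠ ℓ := fun h => T'.irrefl (h ▸ hadjy)
          have hlt := myTakeUntilLenLt P hyP hyne
          have hdy : T'.dist v y ≤ (P.takeUntil y hyP).length := dist_le _
          have htri : T'.dist v ℓ ≤ T'.dist v y + 1 := by
            have h1' := myDistTriangle (⟨P.takeUntil y hyP⟩ : T'.Reachable v y)
              (⟨Walk.cons hadjy.symm Walk.nil⟩ : T'.Reachable y ℓ)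
            have h2' : T'.dist y ℓ ≤ 1 := dist_le (Walk.cons hadjy.symm Walk.nil)
            omega
          have hlenP := myPathLenDist hAcy hP
          omega
        refine ⟨ℓ, b1, a2, ⟨⟨P⟩, hleaf⟩, Prod.ext hEq1.symm hEq2.symm, P, hP, haP, ?_⟩
        have htake : P.takeUntil a2 haP = Q := huniq _ _ (hP.takeUntil haP) hQpath
        rw [htake]
        exact hQsub
      · obtain ⟨b2, _, hEq2⟩ := hpy
        exfalso
        rw [← hEq1, ← hEq2] at hadj
        exact myBipAdjRR N b1 b2 hadj
  choose F Fb Fa hF using key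
  set LS : Set A := {x : A | T'.Reachable v x ∧ ∀ y : A, T'.Adj x y →
      T'.dist v y + 1 = T'.dist v x} with hLSdef
  set g : (A ⊕ B) × (A ⊕ B) → A := fun p => if h : p ∈ M then F p h else v with hgdef
  have hgmem : ∀ p ∈ M, g p ∈ LS.toFinite.toFinset := by
    intro p hp
    rw [Set.Finite.mem_toFinset]
    have := (hF p hp).1
    simp only [hgdef, dif_pos hp]
    exact this
  have hginj : Set.InjOn g ↑M := by
    intro p hp q hq hgpq
    by_contra hne
    obtain ⟨hLp, hpeq, P, hPp, haP, hsubP⟩ := hF p hp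
    obtain ⟨hLq, hqeq, Q2, hPq, haQ, hsubQ⟩ := hF q hq
    have hE : F p hp = F q hq := by
      have h' := hgpq
      simp only [hgdef] at h'
      rw [dif_pos (Finset.mem_coe.mp hp), dif_pos (Finset.mem_coe.mp hq)] at h'
      exact h'
    have hPQ : P = Q2.copy rfl hE.symm :=
      huniq _ _ hPp ((Walk.isPath_copy Q2 rfl hE.symm).mpr hPq)
    have haQ' : Fa q hq ∈ P.support := by
      rw [hPQ, Walk.support_copy]
      exact haQ
    have hsubQ' : ∀ x ∈ (P.takeUntil (Fa q hq) haQ').support, x ∈ N (Fb q hq) := by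
      have heq : P.takeUntil (Fa q hq) haQ' = Q2.takeUntil (Fa q hq) haQ :=
        huniq _ _ (hPp.takeUntil haQ') (hPq.takeUntil haQ)
      intro x hx
      apply hsubQ
      rwa [heq] at hx
    rcases myMemTakeOr P haP haQ' with hcase | hcase
    · -- Fa p ∈ path to Fa q : Fa p ∈ N (Fb q), contradicting ¬Adj q.1 p.2
      have hmem : Fa p hp ∈ N (Fb q hq) := hsubQ' _ hcase
      have h4 := (h2 p hp q hq hne).2.2.2
      apply h4
      rw [hpeq, hqeq]
      exact ((myBipAdj N _ _).mpr hmem).symm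
    · have hmem : Fa q hq ∈ N (Fb p hp) := hsubP _ hcase
      have h3 := (h2 p hp q hq hne).2.2.1
      apply h3
      rw [hpeq, hqeq]
      exact ((myBipAdj N _ _).mpr hmem).symm
  calc M.card ≤ (LS.toFinite.toFinset).card := Finset.card_le_card_of_injOn g hgmem hginj
    _ = LS.ncard := (Set.ncard_eq_toFinset_card LS LS.toFinite).symm
    _ ≤ L := hleaves
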